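/- arXiv:1602.08667 — 6 statements merged into one kernel-verified Lean document; each statement's English description precedes it below -/
import Mathlib

section
/- Let R be a commutative ring with unity, G a group, H a subgroup of G of finite index m, and K a normal subgroup of H such that H/K is abelian. Let ψ : Mat(m, RH) → Mat(m, R(H/K)) be the map applying entrywise the R-algebra homomorphism RH → R(H/K) induced by the quotient map H → H/K. Then for any two complete sets T = {t₁, …, t_m} and T' = {t'₁, …, t'_m} of left coset representatives of H in G and any α ∈ RG, det(ψ(L_T(α))) = det(ψ(L_{T'}(α))) in R(H/K); that is, the noncommutative determinant Det = det ∘ ψ ∘ L_T : RG → R(H/K) is independent of the choice of left coset representatives. -/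
/-!
Write `t'ⱼ = t_{σ j} hⱼ` with `σ` a permutation and `hⱼ ∈ H`. Since the `tᵢ` form a basis of `RG`
as a right `RH`-module, comparing coefficients gives `L_{T'} = D⁻¹ (L_T reindexed by σ) D` with
`D = diag(hⱼ)`. Over the commutative ring `R(H/K)` the diagonal factors cancel in the determinant,
and reindexing rows and columns by the same permutation does not change it.
-/

open MonoidAlgebra Matrix Function

theorem QuotientGroup.bijective_mk_comp_of_existsUnique {G ι : Type*} [Group G] {H : Subgroup G}
    {t : ι → G} (ht : ∀ g : G, ∃! i, (t i)⁻¹ * g ∈ H) :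
    Bijective fun i => (t i : G ⧸ H) := by
  refine ⟨fun i j hij => ?_, fun q => ?_⟩
  · exact (ht (t j)).unique (QuotientGroup.eq.mp hij) (by simp [H.one_mem])
  · induction q using QuotientGroup.induction_on with
    | H g => exact (ht g).exists.imp fun i hi => QuotientGroup.eq.mpr hi

theorem Subgroup.exists_equiv_mul_of_bijective_mk {G ι : Type*} [Group G] {H : Subgroup G}
    {t t' : ι → G} (ht : Bijective fun i => (t i : G ⧸ H))
    (ht' : Bijective fun i => (t' i : G ⧸ H)) :
    ∃ (e : ι ≃ ι) (h : ι → H), ∀ j, t' j = t (e j) * h j := by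
  let e := (Equiv.ofBijective _ ht').trans (Equiv.ofBijective _ ht).symm
  have he : ∀ j, (t (e j) : G ⧸ H) = t' j := fun j =>
    (Equiv.ofBijective _ ht).apply_symm_apply _
  exact ⟨e, fun j => ⟨(t (e j))⁻¹ * t' j, QuotientGroup.eq.mp (he j)⟩, fun j => by simp⟩

theorem Matrix.det_map_diagonal_mul_mul_diagonal {ι S C : Type*} [Fintype ι] [DecidableEq ι]
    [Ring S] [CommRing C] (f : S →+* C) (M : Matrix ι ι S) {a b : ι → S}
    (hab : ∀ i, a i * b i = 1) :
    ((diagonal a * M * diagonal b).map f).det = (M.map f).det := by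
  rw [← RingHom.mapMatrix_apply, map_mul, map_mul]
  simp only [RingHom.mapMatrix_apply, diagonal_map (map_zero f), det_mul, det_diagonal]
  rw [mul_right_comm, ← Finset.prod_mul_distrib]
  simp [← map_mul, hab]

namespace MonoidAlgebra

variable {R G : Type*} [CommRing R] [Group G] {H : Subgroup G}

theorem coeff_sum_of_mul_mapDomain_subtype {ι : Type*} [Fintype ι] {t : ι → G}
    (ht : Injective fun i => (t i : G ⧸ H)) (x : ι → R[H]) (i : ι) (h : H) :
    (∑ j, of R G (t j) * mapDomainRingHom R H.subtype (x j)).coeff (t i * h) =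
      (x i).coeff h := by
  rw [coeff_sum, Finset.sum_apply', Finset.sum_eq_single i]
  · simp [of_apply, Finsupp.mapDomain_apply Subtype.val_injective]
  · intro j _ hji
    rw [of_apply, coeff_single_mul_apply, mapDomainRingHom_apply, coeff_mapDomain,
      Finsupp.mapDomain_of_notMem_range, mul_zero]
    rintro ⟨h', hh'⟩
    refine hji (ht (QuotientGroup.eq.mpr ?_))
    have hji' : (t j)⁻¹ * t i = h' * (h : G)⁻¹ := by
      simp only [Subgroup.coe_subtype] at hh'
      rw [hh']; group
    exact hji' ▸ H.mul_mem h'.2 (H.inv_mem h.2)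
  · simp

theorem sum_of_mul_mapDomain_subtype_injective {ι : Type*} [Fintype ι] {t : ι → G}
    (ht : Injective fun i => (t i : G ⧸ H)) :
    Injective fun x : ι → R[H] => ∑ i, of R G (t i) * mapDomainRingHom R H.subtype (x i) := by
  intro x y hxy
  funext i
  ext h
  simpa only [coeff_sum_of_mul_mapDomain_subtype ht] using congr_arg (coeff · (t i * h)) hxy

end MonoidAlgebra

def IsLeftRegularMatrix {R G ι : Type*} [CommRing R] [Group G] [Fintype ι] (H : Subgroup G)
    (t : ι → G) (α : R[G]) (L : Matrix ι ι R[H]) : Prop :=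
  ∀ j, α * of R G (t j) = ∑ i, of R G (t i) * mapDomainRingHom R H.subtype (L i j)

theorem IsLeftRegularMatrix.eq_diagonal_mul_submatrix_mul_diagonal {R G ι : Type*} [CommRing R]
    [Group G] [Fintype ι] [DecidableEq ι] {H : Subgroup G} {t t' : ι → G} {α : R[G]}
    {L L' : Matrix ι ι R[H]} (hL : IsLeftRegularMatrix H t α L)
    (hL' : IsLeftRegularMatrix H t' α L') (ht' : Injective fun i => (t' i : G ⧸ H))
    {e : ι ≃ ι} {h : ι → H} (hte : ∀ j, t' j = t (e j) * h j) :
    L' = diagonal (fun i => of R H (h i)⁻¹) * L.submatrix e e *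
      diagonal (fun i => of R H (h i)) := by
  set incl := mapDomainRingHom R H.subtype
  have hincl : ∀ a : H, incl (of R H a) = of R G a := fun a => by
    simp [incl, MonoidAlgebra.of_apply]
  have hcol : ∀ j, (L' · j) = fun i => of R H (h i)⁻¹ * L (e i) (e j) * of R H (h j) := by
    intro j
    refine sum_of_mul_mapDomain_subtype_injective ht' ?_
    calc ∑ i, of R G (t' i) * incl (L' i j)
        = α * of R G (t (e j)) * incl (of R H (h j)) := by
          rw [← hL' j, hte, hincl, map_mul, mul_assoc]
      _ = ∑ i, of R G (t (e i)) * incl (L (e i) (e j)) * incl (of R H (h j)) := by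
        rw [hL, Finset.sum_mul, ← e.sum_comp]
      _ = ∑ i, of R G (t' i) * incl (of R H (h i)⁻¹ * L (e i) (e j) * of R H (h j)) := by
        refine Finset.sum_congr rfl fun i _ => ?_
        simp only [hte, map_mul, hincl, Subgroup.coe_inv, mul_assoc]
        rw [← mul_assoc (of R G (h i : G)), ← map_mul, mul_inv_cancel, map_one, one_mul]
  refine Matrix.ext fun i j => ?_
  simp only [mul_diagonal, diagonal_mul, submatrix_apply]
  exact congrFun (hcol j) i

theorem noncommutative_determinant_indep_of_coset_reps_general
    {R : Type*} [CommRing R] {G : Type*} [Group G] (H : Subgroup G)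
    {A : Type*} [CommGroup A] (π : H →* A)
    (m : ℕ) (t t' : Fin m → G)
    (ht : ∀ g : G, ∃! i : Fin m, (t i)⁻¹ * g ∈ H)
    (ht' : ∀ g : G, ∃! i : Fin m, (t' i)⁻¹ * g ∈ H)
    (α : MonoidAlgebra R G)
    (L L' : Matrix (Fin m) (Fin m) (MonoidAlgebra R H))
    (hL : ∀ j : Fin m, α * MonoidAlgebra.of R G (t j) =
      ∑ i : Fin m, MonoidAlgebra.of R G (t i) *
        MonoidAlgebra.mapDomainRingHom R H.subtype (L i j))
    (hL' : ∀ j : Fin m, α * MonoidAlgebra.of R G (t' j) =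
      ∑ i : Fin m, MonoidAlgebra.of R G (t' i) *
        MonoidAlgebra.mapDomainRingHom R H.subtype (L' i j)) :
    (L.map (MonoidAlgebra.mapDomainRingHom R π)).det =
      (L'.map (MonoidAlgebra.mapDomainRingHom R π)).det := by
  have hbij := QuotientGroup.bijective_mk_comp_of_existsUnique ht
  have hbij' := QuotientGroup.bijective_mk_comp_of_existsUnique ht'
  obtain ⟨e, h, hte⟩ := Subgroup.exists_equiv_mul_of_bijective_mk hbij hbij'
  have hunit : ∀ i, of R H (h i)⁻¹ * of R H (h i) = 1 := fun i => by
    rw [← map_mul, inv_mul_cancel, map_one]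
  rw [IsLeftRegularMatrix.eq_diagonal_mul_submatrix_mul_diagonal hL hL' hbij'.1 hte,
    det_map_diagonal_mul_mul_diagonal _ _ hunit, ← submatrix_map, det_submatrix_equiv_self]

/-- The noncommutative determinant
`Det = det ∘ ψ ∘ L_T : RG → R(H/K)` is independent of the choice of the
complete set of left coset representatives.  Here the abelian quotient `H/K`
is encoded as a commutative group `A` together with a surjective homomorphism
`π : H →* A` with kernel `K`, and `ψ` applies `π` entrywise on matrices over
`RH` (via the induced `R`-algebra map `RH → R(H/K)`). -/
theorem noncommutative_determinant_indep_of_coset_reps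
    {R : Type*} [CommRing R] {G : Type*} [Group G] (H : Subgroup G)
    (K : Subgroup H) [K.Normal]
    {A : Type*} [CommGroup A] (π : H →* A)
    (hπ : Function.Surjective π) (hker : π.ker = K)
    (m : ℕ) (t t' : Fin m → G)
    (ht : ∀ g : G, ∃! i : Fin m, (t i)⁻¹ * g ∈ H)
    (ht' : ∀ g : G, ∃! i : Fin m, (t' i)⁻¹ * g ∈ H)
    (α : MonoidAlgebra R G)
    (L L' : Matrix (Fin m) (Fin m) (MonoidAlgebra R H))
    (hL : ∀ j : Fin m, α * MonoidAlgebra.of R G (t j) =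
      ∑ i : Fin m, MonoidAlgebra.of R G (t i) *
        MonoidAlgebra.mapDomainRingHom R H.subtype (L i j))
    (hL' : ∀ j : Fin m, α * MonoidAlgebra.of R G (t' j) =
      ∑ i : Fin m, MonoidAlgebra.of R G (t' i) *
        MonoidAlgebra.mapDomainRingHom R H.subtype (L' i j)) :
    (L.map (MonoidAlgebra.mapDomainRingHom R π)).det =
      (L'.map (MonoidAlgebra.mapDomainRingHom R π)).det :=
  noncommutative_determinant_indep_of_coset_reps_general H π m t t' ht ht' α L L' hL hL'
end

section
/- Let R be a commutative ring with unity, G a group, H a subgroup of G of finite index m, K a normal subgroup of H such that H/K is abelian, and T a complete set of left coset representatives of H in G. Then the noncommutative determinant Det = det ∘ ψ ∘ L_T : RG → R(H/K) is multiplicative: Det(αβ) = Det(α) · Det(β) for all α, β ∈ RG, and Det(1) = 1. -/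
/-!
Representatives `tᵢ` of distinct left cosets of `H` are linearly independent over `RH` acting
on the right: the coefficient of `tᵢ h` in `∑ tⱼ xⱼ` is the coefficient of `h` in `xᵢ`. Hence the
matrix `L_T(α)` is determined by the products `α tⱼ`, and comparing `(αβ) tⱼ = α (β tⱼ)` gives
`L_T(αβ) = L_T(α) L_T(β)` and `L_T(1) = 1`. Applying the ring map `ψ` entrywise and taking
determinants over the commutative ring `R(H/K)` preserves both identities.
-/

open Matrix

namespace MonoidAlgebra

section CosetCombination

variable {R : Type*} [Semiring R] {G : Type*} [Group G] {H : Subgroup G}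
  {ι : Type*} [Fintype ι]

variable (H) in
noncomputable def cosetCombination (t : ι → G) (x : ι → MonoidAlgebra R H) :
    MonoidAlgebra R G :=
  ∑ i, of R G (t i) * mapDomainRingHom R H.subtype (x i)

theorem coeff_cosetCombination {t : ι → G}
    (hcosets : Function.Injective ((↑) ∘ t : ι → G ⧸ H)) (x : ι → MonoidAlgebra R H)
    (i : ι) (h : H) :
    (cosetCombination H t x).coeff (t i * h) = (x i).coeff h := by
  rw [cosetCombination, coeff_sum, Finsupp.finsetSum_apply,
    Finset.sum_eq_single_of_mem i (Finset.mem_univ i)]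
  · simp
  · intro j _ hji
    rw [of_apply, coeff_single_mul_apply, mapDomainRingHom_apply, coeff_mapDomain,
      Finsupp.mapDomain_of_notMem_range, mul_zero]
    rintro ⟨k, hk⟩
    apply hji (hcosets (QuotientGroup.eq.mpr _))
    have : (t j)⁻¹ * t i = (t j)⁻¹ * (t i * h) * (h : G)⁻¹ := by group
    rw [this, ← hk]
    exact H.mul_mem k.2 (H.inv_mem h.2)

theorem cosetCombination_injective {t : ι → G}
    (hcosets : Function.Injective ((↑) ∘ t : ι → G ⧸ H)) :
    Function.Injective (cosetCombination (R := R) H t) := by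
  intro x y hxy
  funext i
  ext h
  rw [← coeff_cosetCombination hcosets, ← coeff_cosetCombination hcosets, hxy]

theorem matrix_ext_of_cosetCombination {t : ι → G}
    (hcosets : Function.Injective ((↑) ∘ t : ι → G ⧸ H)) {M N : Matrix ι ι (MonoidAlgebra R H)}
    (h : ∀ j, cosetCombination H t (fun i => M i j) = cosetCombination H t (fun i => N i j)) :
    M = N :=
  Matrix.ext fun i j => congrFun (cosetCombination_injective hcosets (h j)) i

theorem cosetCombination_pi_single [DecidableEq ι] (t : ι → G) (j : ι) :
    cosetCombination H t (Pi.single j 1 : ι → MonoidAlgebra R H) = of R G (t j) := by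
  simp [cosetCombination, Pi.single_apply]

variable (H) in
def IsLeftRegularRep (t : ι → G) (L : MonoidAlgebra R G → Matrix ι ι (MonoidAlgebra R H)) :
    Prop :=
  ∀ α j, α * of R G (t j) = cosetCombination H t (fun i => L α i j)

namespace IsLeftRegularRep

variable {t : ι → G} {L : MonoidAlgebra R G → Matrix ι ι (MonoidAlgebra R H)}

theorem mul_cosetCombination (hL : IsLeftRegularRep H t L) (α : MonoidAlgebra R G)
    (x : ι → MonoidAlgebra R H) :
    α * cosetCombination H t x = cosetCombination H t (L α *ᵥ x) := by
  simp only [cosetCombination, Finset.mul_sum, ← mul_assoc]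
  simp only [hL α _, cosetCombination, Finset.sum_mul, mulVec, dotProduct, map_sum, map_mul,
    Finset.mul_sum, mul_assoc]
  exact Finset.sum_comm

theorem map_mul (hcosets : Function.Injective ((↑) ∘ t : ι → G ⧸ H))
    (hL : IsLeftRegularRep H t L) (α β : MonoidAlgebra R G) : L (α * β) = L α * L β := by
  refine matrix_ext_of_cosetCombination hcosets fun j => ?_
  rw [← hL, mul_assoc, hL, hL.mul_cosetCombination]
  rfl

theorem map_one [DecidableEq ι] (hcosets : Function.Injective ((↑) ∘ t : ι → G ⧸ H))
    (hL : IsLeftRegularRep H t L) : L 1 = 1 := by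
  refine matrix_ext_of_cosetCombination hcosets fun j => ?_
  rw [← hL, one_mul, ← cosetCombination_pi_single (R := R) t j]
  congr 1
  ext i
  simp [one_apply, Pi.single_apply, eq_comm]

end IsLeftRegularRep

end CosetCombination

end MonoidAlgebra

theorem noncommutative_determinant_multiplicative_general
    {R : Type*} [CommRing R] {G : Type*} [Group G] (H : Subgroup G)
    {A : Type*} [CommGroup A] (π : H →* A)
    (m : ℕ) (t : Fin m → G)
    (ht : ∀ g : G, ∃! i : Fin m, (t i)⁻¹ * g ∈ H)
    (L : MonoidAlgebra R G → Matrix (Fin m) (Fin m) (MonoidAlgebra R H))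
    (hL : ∀ (α : MonoidAlgebra R G) (j : Fin m),
      α * MonoidAlgebra.of R G (t j) =
        ∑ i : Fin m, MonoidAlgebra.of R G (t i) *
          MonoidAlgebra.mapDomainRingHom R H.subtype (L α i j)) :
    (∀ α β : MonoidAlgebra R G,
      ((L (α * β)).map (MonoidAlgebra.mapDomainRingHom R π)).det =
        ((L α).map (MonoidAlgebra.mapDomainRingHom R π)).det *
          ((L β).map (MonoidAlgebra.mapDomainRingHom R π)).det) ∧
    ((L 1).map (MonoidAlgebra.mapDomainRingHom R π)).det = 1 := by
  have hcosets : Function.Injective ((↑) ∘ t : Fin m → G ⧸ H) := fun i j hij =>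
    (ht (t j)).unique (QuotientGroup.eq.mp hij) (by simp)
  have hL : MonoidAlgebra.IsLeftRegularRep H t L := hL
  refine ⟨fun α β => ?_, ?_⟩
  · rw [hL.map_mul hcosets, Matrix.map_mul, det_mul]
  · rw [hL.map_one hcosets, Matrix.map_one _ (map_zero _) (map_one _), det_one]

/-- The noncommutative determinant
`Det = det ∘ ψ ∘ L_T : RG → R(H/K)` is multiplicative and unital:
`Det(αβ) = Det(α)·Det(β)` and `Det(1) = 1`.  Here the abelian quotient `H/K`
is encoded as a commutative group `A` together with a surjective homomorphism
`π : H →* A` with kernel `K`, and `ψ` applies `π` entrywise on matrices over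
`RH` (via the induced `R`-algebra map `RH → R(H/K)`). -/
theorem noncommutative_determinant_multiplicative
    {R : Type*} [CommRing R] {G : Type*} [Group G] (H : Subgroup G)
    (K : Subgroup H) [K.Normal]
    {A : Type*} [CommGroup A] (π : H →* A)
    (hπ : Function.Surjective π) (hker : π.ker = K)
    (m : ℕ) (t : Fin m → G)
    (ht : ∀ g : G, ∃! i : Fin m, (t i)⁻¹ * g ∈ H)
    (L : MonoidAlgebra R G → Matrix (Fin m) (Fin m) (MonoidAlgebra R H))
    (hL : ∀ (α : MonoidAlgebra R G) (j : Fin m),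
      α * MonoidAlgebra.of R G (t j) =
        ∑ i : Fin m, MonoidAlgebra.of R G (t i) *
          MonoidAlgebra.mapDomainRingHom R H.subtype (L α i j)) :
    (∀ α β : MonoidAlgebra R G,
      ((L (α * β)).map (MonoidAlgebra.mapDomainRingHom R π)).det =
        ((L α).map (MonoidAlgebra.mapDomainRingHom R π)).det *
          ((L β).map (MonoidAlgebra.mapDomainRingHom R π)).det) ∧
    ((L 1).map (MonoidAlgebra.mapDomainRingHom R π)).det = 1 :=
  noncommutative_determinant_multiplicative_general H π m t ht L hL
end

section
/- Let R be a commutative ring with unity, G a group, H a subgroup of G of finite index m, K a normal subgroup of H such that H/K is abelian, and T = {t₁, …, t_m} a complete set of left coset representatives of H in G. Then for every g ∈ G there exists a sign sgn(g) ∈ {−1, 1} such that Det(g) = det(ψ(L_T(g))) = sgn(g) · V_{G→H/K}(g) in R(H/K), where V_{G→H/K}(g) = ∏_{i=1}^m ((\overline{g tᵢ})⁻¹ g tᵢ)K is the left transfer regarded as the corresponding basis element of R(H/K). Moreover sgn(g) is the sign of the permutation of {1, …, m} induced by the left action of g on the left cosets t₁H, …, t_mH. -/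
/-!
Because the representatives `tᵢ` lie in distinct cosets of `H`, an element of `RG` has a unique
expansion `∑ tᵢ αᵢ` with `αᵢ ∈ RH`. Since `g tⱼ = t_{σ j} · ((t_{σ j})⁻¹ g tⱼ)`, the `j`-th column
of `L_T(g)` is therefore the single basis element `(t_{σ j})⁻¹ g tⱼ` in row `σ j`. After `ψ` this
is a monomial matrix, whose determinant is `sgn σ` times the product of its nonzero entries, and
that product is the transfer because `\overline{g tⱼ} = t_{σ j}`.
-/
namespace MonoidAlgebra

variable {R G ι : Type*} [Semiring R] [Group G] {H : Subgroup G} [Fintype ι] {t : ι → G}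

theorem coeff_sum_of_mul_mapDomainRingHom_subtype (ht : Function.Injective fun i ↦ (t i : G ⧸ H))
    (v : ι → MonoidAlgebra R H) (i : ι) (h : H) :
    (∑ k, of R G (t k) * mapDomainRingHom R H.subtype (v k)).coeff (t i * h) = (v i).coeff h := by
  rw [coeff_sum, Finset.sum_apply', Fintype.sum_eq_single i]
  · simp
  · intro k hk
    have hx : (t k)⁻¹ * (t i * h) ∉ Set.range H.subtype := by
      rintro ⟨x, hx⟩
      refine hk (ht (QuotientGroup.eq.mpr ?_))
      have hx' : (t k)⁻¹ * t i = x * (h : G)⁻¹ := by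
        rw [H.subtype_apply] at hx
        rw [hx]
        group
      exact hx' ▸ H.mul_mem x.2 (H.inv_mem h.2)
    simpa using Finsupp.mapDomain_of_notMem_range _ _ hx

theorem sum_of_mul_mapDomainRingHom_subtype_injective
    (ht : Function.Injective fun i ↦ (t i : G ⧸ H)) :
    Function.Injective fun v : ι → MonoidAlgebra R H ↦
      ∑ k, of R G (t k) * mapDomainRingHom R H.subtype (v k) := by
  intro v w hvw
  ext i h
  simpa only [coeff_sum_of_mul_mapDomainRingHom_subtype ht] using
    congr_arg (fun x : MonoidAlgebra R G ↦ x.coeff (t i * h)) hvw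

theorem eq_piSingle_of_of_eq_sum_of_mul_mapDomainRingHom_subtype [DecidableEq ι]
    (ht : Function.Injective fun i ↦ (t i : G ⧸ H)) {x : G} {j : ι} (hj : (t j)⁻¹ * x ∈ H)
    {v : ι → MonoidAlgebra R H}
    (hv : of R G x = ∑ k, of R G (t k) * mapDomainRingHom R H.subtype (v k)) :
    v = Pi.single j (single ⟨(t j)⁻¹ * x, hj⟩ 1) := by
  refine sum_of_mul_mapDomainRingHom_subtype_injective ht ?_
  simp only [← hv]
  rw [Fintype.sum_eq_single j fun k hk ↦ by simp [Pi.single_eq_of_ne hk]]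
  simp

end MonoidAlgebra

theorem Matrix.det_eq_sign_smul_prod_of_apply_eq_piSingle {n R : Type*} [DecidableEq n]
    [Fintype n] [CommRing R] {M : Matrix n n R} (σ : Equiv.Perm n) (d : n → R)
    (hM : ∀ i j, M i j = (Pi.single (σ j) (d j) : n → R) i) :
    M.det = (Equiv.Perm.sign σ : ℤ) • ∏ j, d j := by
  have hM' : M = (Matrix.diagonal d).submatrix σ.symm id := by
    ext i j
    rw [hM, Pi.single_apply, Matrix.submatrix_apply, Matrix.diagonal_apply, id]
    grind [Equiv.symm_apply_eq]
  rw [hM', Matrix.det_permute, Matrix.det_diagonal, Equiv.Perm.sign_symm, zsmul_eq_mul]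

theorem noncommutative_determinant_eq_sign_mul_transfer_general
    {R : Type*} [CommRing R] {G : Type*} [Group G] (H : Subgroup G)
    {A : Type*} [CommGroup A] (π : H →* A)
    (m : ℕ) (t : Fin m → G)
    (ht : ∀ g : G, ∃! i : Fin m, (t i)⁻¹ * g ∈ H)
    (bar : G → Fin m) (hbar : ∀ g : G, (t (bar g))⁻¹ * g ∈ H)
    (g : G)
    (σ : Equiv.Perm (Fin m)) (hσ : ∀ j : Fin m, (t (σ j))⁻¹ * (g * t j) ∈ H)
    (L : Matrix (Fin m) (Fin m) (MonoidAlgebra R H))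
    (hL : ∀ j : Fin m, MonoidAlgebra.of R G g * MonoidAlgebra.of R G (t j) =
      ∑ i : Fin m, MonoidAlgebra.of R G (t i) *
        MonoidAlgebra.mapDomainRingHom R H.subtype (L i j)) :
    (L.map (MonoidAlgebra.mapDomainRingHom R π)).det =
      ((Equiv.Perm.sign σ : ℤ)) •
        MonoidAlgebra.single
          (∏ i : Fin m, π ⟨(t (bar (g * t i)))⁻¹ * (g * t i), hbar (g * t i)⟩)
          (1 : R) := by
  have hinj : Function.Injective fun i ↦ (t i : G ⧸ H) := fun i j hij ↦
    (ht (t j)).unique (QuotientGroup.eq.mp hij) (by simp [H.one_mem])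
  have hbar_eq (j : Fin m) : bar (g * t j) = σ j := (ht _).unique (hbar _) (hσ j)
  have hcol (j : Fin m) :
      (L · j) = Pi.single (σ j) (MonoidAlgebra.single ⟨(t (σ j))⁻¹ * (g * t j), hσ j⟩ 1) :=
    MonoidAlgebra.eq_piSingle_of_of_eq_sum_of_mul_mapDomainRingHom_subtype hinj (hσ j)
      (by rw [← hL, map_mul])
  rw [Matrix.det_eq_sign_smul_prod_of_apply_eq_piSingle σ _ fun i j ↦ by
    rw [Matrix.map_apply, congr_fun (hcol j) i,
      Pi.apply_single (fun _ ↦ MonoidAlgebra.mapDomainRingHom R π) fun _ ↦ map_zero _]]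
  simp [hbar_eq]

/-- For a group element `g`, the noncommutative determinant
equals the left transfer up to sign:
`Det(g) = det(ψ(L_T(g))) = sgn(g) · V_{G→H/K}(g)` in `R(H/K)`, where `sgn(g)`
is the sign of the permutation `σ` of `{1,…,m}` induced by the left action of
`g` on the left cosets (`g tⱼ H = t_{σ j} H`), and the transfer value
`V_{G→H/K}(g) = ∏ᵢ π((t (bar (g tᵢ)))⁻¹ g tᵢ)` is regarded as the
corresponding basis element of `R(H/K)`.  The abelian quotient `H/K` is
encoded as a commutative group `A` with a surjective homomorphism `π : H →* A`
with kernel `K`, and `ψ` applies `π` entrywise. -/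
theorem noncommutative_determinant_eq_sign_mul_transfer
    {R : Type*} [CommRing R] {G : Type*} [Group G] (H : Subgroup G)
    (K : Subgroup H) [K.Normal]
    {A : Type*} [CommGroup A] (π : H →* A)
    (hπ : Function.Surjective π) (hker : π.ker = K)
    (m : ℕ) (t : Fin m → G)
    (ht : ∀ g : G, ∃! i : Fin m, (t i)⁻¹ * g ∈ H)
    (bar : G → Fin m) (hbar : ∀ g : G, (t (bar g))⁻¹ * g ∈ H)
    (g : G)
    (σ : Equiv.Perm (Fin m)) (hσ : ∀ j : Fin m, (t (σ j))⁻¹ * (g * t j) ∈ H)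
    (L : Matrix (Fin m) (Fin m) (MonoidAlgebra R H))
    (hL : ∀ j : Fin m, MonoidAlgebra.of R G g * MonoidAlgebra.of R G (t j) =
      ∑ i : Fin m, MonoidAlgebra.of R G (t i) *
        MonoidAlgebra.mapDomainRingHom R H.subtype (L i j)) :
    (L.map (MonoidAlgebra.mapDomainRingHom R π)).det =
      ((Equiv.Perm.sign σ : ℤ)) •
        MonoidAlgebra.single
          (∏ i : Fin m, π ⟨(t (bar (g * t i)))⁻¹ * (g * t i), hbar (g * t i)⟩)
          (1 : R) :=
  noncommutative_determinant_eq_sign_mul_transfer_general H π m t ht bar hbar g σ hσ L hL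
end

section
/- Let R be a commutative ring with unity, G a group, H a subgroup of G of finite index m, and {u₁, …, u_m} a complete set of right coset representatives of H in G. For every α ∈ RG there exists a unique matrix R_U(α) ∈ Mat(m, RH) such that (u₁ … u_m)ᵀ α = R_U(α) (u₁ … u_m)ᵀ as column vectors over RG, and its entries are given explicitly by R_U(α)_{ij} = ∑_{g∈G} χ̇(uᵢ g u_j⁻¹) · x_g · (uᵢ g u_j⁻¹) for α = ∑_{g∈G} x_g g, where χ̇(g) = 1 if g ∈ H and 0 otherwise. -/
open scoped Classical

/-!
The family `u` is a basis of `RG` as a left `RH`-module: in `∑ⱼ βⱼ uⱼ` the coefficient at `g`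
is read off from the single summand `j` with `g uⱼ⁻¹ ∈ H`, namely as `βⱼ (g uⱼ⁻¹)`. Hence
the matrix is unique, and comparing coefficients of `uᵢ α` shows that its `(i, j)` entry is
the restriction to `H` of `uᵢ α uⱼ⁻¹`, which is the displayed sum.
-/

namespace MonoidAlgebra

variable {R : Type*} [CommRing R] {G : Type*} [Group G] (H : Subgroup G)

/-- The restriction to `H` of `a x b⁻¹`, written as a sum over the support of `x`. -/
noncomputable def conjRestrict (a b : G) (x : MonoidAlgebra R G) : MonoidAlgebra R H :=
  Finsupp.sum x.coeff fun (g : G) (r : R) =>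
    if hg : a * g * b⁻¹ ∈ H then single (⟨a * g * b⁻¹, hg⟩ : H) r else 0

theorem coeff_conjRestrict (a b : G) (x : MonoidAlgebra R G) (h : H) :
    (conjRestrict H a b x).coeff h = x.coeff (a⁻¹ * h * b) := by
  rw [conjRestrict, coeff_finsuppSum, Finsupp.sum_apply]
  have hterm : ∀ g (r : R), (if hg : a * g * b⁻¹ ∈ H then single (⟨a * g * b⁻¹, hg⟩ : H) r
      else 0).coeff h = if g = a⁻¹ * h * b then r else 0 := by
    intro g r
    have hiff : a * g * b⁻¹ = h ↔ g = a⁻¹ * h * b := by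
      constructor
      · intro e; rw [← e]; group
      · intro e; rw [e]; group
    by_cases hg : a * g * b⁻¹ ∈ H
    · rw [dif_pos hg, coeff_single, Finsupp.single_apply]
      simp only [Subtype.ext_iff, hiff]
    · rw [dif_neg hg, if_neg]
      · rfl
      · rintro rfl
        exact hg (by simp [mul_assoc])
  simp only [hterm]
  exact Finsupp.sum_ite_self_eq' _ _

theorem coeff_mapDomain_subtype_mul_of (β : MonoidAlgebra R H) (v g : G) :
    (mapDomainRingHom R H.subtype β * of R G v).coeff g
      = if hg : g * v⁻¹ ∈ H then β.coeff ⟨g * v⁻¹, hg⟩ else 0 := by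
  rw [of_apply, coeff_mul_single_apply, mul_one, mapDomainRingHom_apply, coeff_mapDomain]
  split_ifs with hg
  · exact Finsupp.mapDomain_apply H.subtype_injective β.coeff ⟨g * v⁻¹, hg⟩
  · apply Finsupp.mapDomain_of_notMem_range
    rintro ⟨h, hh⟩
    rw [← hh] at hg
    exact hg h.2

variable {H} {m : ℕ} {u : Fin m → G}

theorem coeff_sum_mapDomain_subtype_mul_of (hu : ∀ g : G, ∃! i : Fin m, g * (u i)⁻¹ ∈ H)
    (β : Fin m → MonoidAlgebra R H) {g : G} {j : Fin m} (hj : g * (u j)⁻¹ ∈ H) :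
    (∑ k, mapDomainRingHom R H.subtype (β k) * of R G (u k)).coeff g
      = (β j).coeff ⟨g * (u j)⁻¹, hj⟩ := by
  rw [coeff_sum, Finset.sum_apply', Finset.sum_eq_single j]
  · rw [coeff_mapDomain_subtype_mul_of, dif_pos hj]
  · intro k _ hkj
    rw [coeff_mapDomain_subtype_mul_of, dif_neg]
    exact fun hk => hkj ((hu g).unique hk hj)
  · exact fun hj' => (hj' (Finset.mem_univ j)).elim

theorem sum_mapDomain_subtype_mul_of_injective
    (hu : ∀ g : G, ∃! i : Fin m, g * (u i)⁻¹ ∈ H) :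
    Function.Injective fun β : Fin m → MonoidAlgebra R H =>
      ∑ k, mapDomainRingHom R H.subtype (β k) * of R G (u k) := by
  intro β γ hβγ
  funext j
  ext h
  have hj : (h : G) * u j * (u j)⁻¹ ∈ H := by simp
  have hcoeff := congr_arg (fun x : MonoidAlgebra R G => x.coeff (h * u j)) hβγ
  simpa only [coeff_sum_mapDomain_subtype_mul_of hu _ hj, mul_inv_cancel_right] using hcoeff

theorem of_mul_eq_sum_conjRestrict (hu : ∀ g : G, ∃! i : Fin m, g * (u i)⁻¹ ∈ H)
    (x : MonoidAlgebra R G) (i : Fin m) :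
    of R G (u i) * x
      = ∑ j, mapDomainRingHom R H.subtype (conjRestrict H (u i) (u j) x) * of R G (u j) := by
  ext g
  obtain ⟨j, hj, -⟩ := hu g
  rw [coeff_sum_mapDomain_subtype_mul_of hu _ hj, coeff_conjRestrict, of_apply,
    coeff_single_mul_apply, one_mul]
  congr 1
  group

theorem eq_conjRestrict_of_of_mul_eq_sum (hu : ∀ g : G, ∃! i : Fin m, g * (u i)⁻¹ ∈ H)
    {x : MonoidAlgebra R G} {M : Matrix (Fin m) (Fin m) (MonoidAlgebra R H)}
    (hM : ∀ i, of R G (u i) * x = ∑ j, mapDomainRingHom R H.subtype (M i j) * of R G (u j))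
    (i j : Fin m) : M i j = conjRestrict H (u i) (u j) x :=
  congr_fun (sum_mapDomain_subtype_mul_of_injective hu
    ((hM i).symm.trans (of_mul_eq_sum_conjRestrict hu x i))) j

end MonoidAlgebra

/-- For every `α ∈ RG` there is a unique matrix
`R_U(α) ∈ Mat(m, RH)` with `uᵢ α = ∑ⱼ R_U(α) i j · uⱼ` in `RG` for every `i`
(the right regular representation with respect to the complete set `u` of
right coset representatives), and its entries are given explicitly by
`R_U(α) i j = ∑ g, χ̇(uᵢ g uⱼ⁻¹) x_g (uᵢ g uⱼ⁻¹)` for `α = ∑ g, x_g g`. -/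
theorem right_regular_representation_exists_unique_and_entries
    {R : Type*} [CommRing R] {G : Type*} [Group G] (H : Subgroup G)
    (m : ℕ) (u : Fin m → G)
    (hu : ∀ g : G, ∃! i : Fin m, g * (u i)⁻¹ ∈ H)
    (α : MonoidAlgebra R G) :
    (∃! Rm : Matrix (Fin m) (Fin m) (MonoidAlgebra R H),
      ∀ i : Fin m, MonoidAlgebra.of R G (u i) * α =
        ∑ j : Fin m, MonoidAlgebra.mapDomainRingHom R H.subtype (Rm i j) *
          MonoidAlgebra.of R G (u j)) ∧
    (∀ Rm : Matrix (Fin m) (Fin m) (MonoidAlgebra R H),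
      (∀ i : Fin m, MonoidAlgebra.of R G (u i) * α =
        ∑ j : Fin m, MonoidAlgebra.mapDomainRingHom R H.subtype (Rm i j) *
          MonoidAlgebra.of R G (u j)) →
      ∀ i j : Fin m, Rm i j =
        Finsupp.sum α.coeff fun (g : G) (x : R) =>
          if hg : u i * g * (u j)⁻¹ ∈ H then
            MonoidAlgebra.single (⟨u i * g * (u j)⁻¹, hg⟩ : H) x
          else 0) := by
  exact ⟨⟨fun i j => MonoidAlgebra.conjRestrict H (u i) (u j) α,
    MonoidAlgebra.of_mul_eq_sum_conjRestrict hu α,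
    fun _ hM => Matrix.ext (MonoidAlgebra.eq_conjRestrict_of_of_mul_eq_sum hu hM)⟩,
    fun _ hM => MonoidAlgebra.eq_conjRestrict_of_of_mul_eq_sum hu hM⟩
end

section
/- Let R be a commutative ring with unity, G a group, H a subgroup of G of finite index m, and K a normal subgroup of H with H/K abelian. Let T = {t₁, …, t_m} be a complete set of left coset representatives and U = {u₁, …, u_m} any complete set of right coset representatives of H in G. Then for every g ∈ G, det(ψ(R_U(g))) = det(ψ(L_T(g))) in R(H/K); that is, the noncommutative determinant computed from any right regular representation agrees on group elements with that computed from any left regular representation. -/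
/-!
With respect to a left transversal `t`, the matrix `L_T(g)` is monomial: `g t_j = t_{σ j} h_j`
with `σ` the permutation by which `g` acts on `G ⧸ H` and `h_j ∈ H`. Its image under `ψ` therefore
has determinant `sign σ · ∏ π(h_j)`, and `∏ π(h_j)` is the transfer of `π` at `g`; neither factor
depends on `t`. A right transversal `u` gives the left transversal `u⁻¹`, and `R_U(g) = L_{U⁻¹}(g)`
entrywise because `u_i g = h u_j ↔ g u_j⁻¹ = u_i⁻¹ h`.
-/

open MonoidAlgebra

theorem Matrix.det_eq_sign_smul_prod_of_apply_eq_zero {n R : Type*} [DecidableEq n] [Fintype n]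
    [CommRing R] (M : Matrix n n R) (σ : Equiv.Perm n) (hM : ∀ i j, i ≠ σ j → M i j = 0) :
    M.det = Equiv.Perm.sign σ • ∏ j, M (σ j) j := by
  rw [det_apply, Finset.sum_eq_single σ (fun τ _ hτ => ?_) (by simp)]
  obtain ⟨j, hj⟩ : ∃ j, τ j ≠ σ j := not_forall.mp fun h => hτ (Equiv.ext h)
  exact smul_eq_zero_of_right _ (Finset.prod_eq_zero (Finset.mem_univ j) (hM (τ j) j hj))

namespace Subgroup

variable {G : Type*} [Group G] (H : Subgroup G) {ι : Type*}

theorem existsUnique_inv_inv_mul_mem {u : ι → G} (hu : ∀ x, ∃! i, x * (u i)⁻¹ ∈ H) (x : G) :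
    ∃! i, (u i)⁻¹⁻¹ * x ∈ H := by
  simpa only [inv_inv, ← H.inv_mem_iff (x := _ * x), mul_inv_rev] using hu x⁻¹

section Coefficients

variable (R : Type*) [Semiring R]

open scoped Classical in
noncomputable def leftRegularMatrix (t : ι → G) (g : G) : Matrix ι ι (MonoidAlgebra R H) :=
  Matrix.of fun i j => if h : (t i)⁻¹ * (g * t j) ∈ H then of R H ⟨_, h⟩ else 0

variable {R}

theorem coeff_leftRegularMatrix_apply (t : ι → G) (g : G) (i j : ι) (h : H) :
    (leftRegularMatrix H R t g i j).coeff h = (of R G (g * t j)).coeff (t i * h) := by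
  classical
  have key : g * t j = t i * h ↔ (t i)⁻¹ * (g * t j) = h := by rw [inv_mul_eq_iff_eq_mul]
  rw [leftRegularMatrix, Matrix.of_apply]
  split_ifs with hmem
  · simp [of_apply, Finsupp.single_apply, Subtype.ext_iff, key]
  · have : g * t j ≠ t i * h := fun heq => hmem (key.mp heq ▸ h.2)
    simp [of_apply, this]

theorem coeff_sum_of_mul_mapDomain [Fintype ι] {t : ι → G} (ht : ∀ x, ∃! i, (t i)⁻¹ * x ∈ H)
    (x : ι → MonoidAlgebra R H) (i : ι) (h : H) :
    (∑ k, of R G (t k) * mapDomainRingHom R H.subtype (x k)).coeff (t i * h) = (x i).coeff h := by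
  rw [coeff_sum, Finset.sum_apply', Finset.sum_eq_single i]
  · simp [of_apply, mapDomainRingHom_apply, coeff_mapDomain,
      Finsupp.mapDomain_apply Subtype.val_injective]
  · intro k _ hk
    simp only [of_apply, coeff_single_mul_apply, one_mul, mapDomainRingHom_apply, coeff_mapDomain]
    refine Finsupp.mapDomain_of_notMem_range _ _ fun ⟨h', hh'⟩ => hk ?_
    refine (ht (t i * h)).unique ?_ (by simp)
    simp [← hh']
  · simp

theorem coeff_sum_mapDomain_mul_of [Fintype ι] {u : ι → G} (hu : ∀ x, ∃! i, x * (u i)⁻¹ ∈ H)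
    (x : ι → MonoidAlgebra R H) (j : ι) (h : H) :
    (∑ k, mapDomainRingHom R H.subtype (x k) * of R G (u k)).coeff (h * u j) = (x j).coeff h := by
  rw [coeff_sum, Finset.sum_apply', Finset.sum_eq_single j]
  · simp [of_apply, mapDomainRingHom_apply, coeff_mapDomain,
      Finsupp.mapDomain_apply Subtype.val_injective]
  · intro k _ hk
    simp only [of_apply, coeff_mul_single_apply, mul_one, mapDomainRingHom_apply, coeff_mapDomain]
    refine Finsupp.mapDomain_of_notMem_range _ _ fun ⟨h', hh'⟩ => hk ?_
    refine (hu (h * u j)).unique ?_ (by simp)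
    simp [← hh']
  · simp

theorem eq_leftRegularMatrix_of_mul_eq_sum [Fintype ι] {t : ι → G}
    (ht : ∀ x, ∃! i, (t i)⁻¹ * x ∈ H) (g : G) (L : Matrix ι ι (MonoidAlgebra R H))
    (hL : ∀ j, of R G g * of R G (t j) =
      ∑ i, of R G (t i) * mapDomainRingHom R H.subtype (L i j)) :
    L = leftRegularMatrix H R t g := by
  ext i j h
  rw [coeff_leftRegularMatrix_apply, map_mul (of R G), hL, coeff_sum_of_mul_mapDomain H ht]

theorem eq_leftRegularMatrix_inv_of_mul_eq_sum [Fintype ι] {u : ι → G}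
    (hu : ∀ x, ∃! i, x * (u i)⁻¹ ∈ H) (g : G) (M : Matrix ι ι (MonoidAlgebra R H))
    (hM : ∀ i, of R G (u i) * of R G g =
      ∑ j, mapDomainRingHom R H.subtype (M i j) * of R G (u j)) :
    M = leftRegularMatrix H R (fun i => (u i)⁻¹) g := by
  classical
  ext i j h
  rw [coeff_leftRegularMatrix_apply, ← coeff_sum_mapDomain_mul_of H hu (M i) j h, ← hM,
    ← map_mul (of R G)]
  simp only [of_apply, coeff_single, Finsupp.single_apply]
  congr 1
  rw [mul_inv_eq_iff_eq_mul, mul_assoc, eq_inv_mul_iff_mul_eq]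

end Coefficients

section LeftTransversal

variable {t : ι → G} (ht : ∀ x, ∃! i, (t i)⁻¹ * x ∈ H)

noncomputable def leftTransversalEquiv : ι ≃ G ⧸ H :=
  Equiv.ofBijective (fun i => (t i : G ⧸ H))
    ⟨fun i j hij => (ht (t j)).unique (QuotientGroup.eq.mp hij) (by simp),
     fun q => QuotientGroup.induction_on q fun x =>
      (ht x).exists.imp fun _ hi => QuotientGroup.eq.mpr hi⟩

@[simp]
theorem leftTransversalEquiv_apply (i : ι) : leftTransversalEquiv H ht i = t i := rfl

noncomputable def leftTransversalPerm (g : G) : Equiv.Perm ι :=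
  (leftTransversalEquiv H ht).symm.permCongr (MulAction.toPerm g)

theorem inv_mul_mem_iff_eq_leftTransversalPerm (g : G) (i j : ι) :
    (t i)⁻¹ * (g * t j) ∈ H ↔ i = leftTransversalPerm H ht g j := by
  rw [leftTransversalPerm, Equiv.permCongr_apply, Equiv.symm_symm, Equiv.eq_symm_apply]
  simp [QuotientGroup.eq]

theorem transfer_eq_prod_leftTransversal [Fintype ι] [H.FiniteIndex] {A : Type*} [CommGroup A]
    (π : H →* A) (g : G) :
    π.transfer g = ∏ j, π ⟨(t (leftTransversalPerm H ht g j))⁻¹ * (g * t j),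
      (inv_mul_mem_iff_eq_leftTransversalPerm H ht g _ j).2 rfl⟩ := by
  let e := leftTransversalEquiv H ht
  have hf : ∀ q, ((t (e.symm q) : G) : G ⧸ H) = q := e.apply_symm_apply
  let T : H.LeftTransversal := ⟨_, isComplement_range_left hf⟩
  let := H.fintypeQuotientOfFiniteIndex
  rw [MonoidHom.transfer_def π T g, leftTransversals.diff]
  refine Fintype.prod_equiv ((MulAction.toPerm g).symm.trans e.symm) _ _ fun q => ?_
  congr 2
  simp only [T, IsComplement.leftQuotientEquiv_apply hf, smul_apply_eq_smul_apply_inv_smul,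
    smul_eq_mul, leftTransversalPerm, Equiv.trans_apply, MulAction.toPerm_symm_apply,
    Equiv.permCongr_apply, Equiv.symm_symm, leftTransversalEquiv_apply, MulAction.toPerm_apply,
    MulAction.Quotient.smul_mk, mul_left_inj, inv_inj]
  have hq : ((g * t (e.symm (g⁻¹ • q)) : G) : G ⧸ H) = q := by
    rw [← smul_eq_mul, ← MulAction.Quotient.smul_mk, hf, smul_inv_smul]
  rw [hq]

end LeftTransversal

theorem det_map_leftRegularMatrix [Fintype ι] [DecidableEq ι] [Fintype (G ⧸ H)]
    [DecidableEq (G ⧸ H)] [H.FiniteIndex] {R : Type*} [CommRing R] {A : Type*} [CommGroup A]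
    (π : H →* A) {t : ι → G} (ht : ∀ x, ∃! i, (t i)⁻¹ * x ∈ H) (g : G) :
    ((leftRegularMatrix H R t g).map (mapDomainRingHom R π)).det =
      Equiv.Perm.sign (MulAction.toPerm g : Equiv.Perm (G ⧸ H)) • of R A (π.transfer g) := by
  have hσ := inv_mul_mem_iff_eq_leftTransversalPerm H ht g
  rw [Matrix.det_eq_sign_smul_prod_of_apply_eq_zero _ (leftTransversalPerm H ht g),
    leftTransversalPerm, Equiv.Perm.sign_permCongr, ← leftTransversalPerm,
    transfer_eq_prod_leftTransversal H ht π, map_prod]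
  · congr 1
    refine Finset.prod_congr rfl fun j _ => ?_
    simp [leftRegularMatrix, dif_pos ((hσ _ j).2 rfl), mapDomainRingHom_apply, of_apply]
  · intro i j hij
    simp [leftRegularMatrix, dif_neg (mt (hσ i j).1 hij)]

theorem det_map_leftRegularMatrix_eq {κ : Type*} [Fintype ι] [DecidableEq ι] [Fintype κ]
    [DecidableEq κ] {R : Type*} [CommRing R] {A : Type*} [CommGroup A] (π : H →* A)
    {t : ι → G} {t' : κ → G} (ht : ∀ x, ∃! i, (t i)⁻¹ * x ∈ H)
    (ht' : ∀ x, ∃! i, (t' i)⁻¹ * x ∈ H) (g : G) :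
    ((leftRegularMatrix H R t g).map (mapDomainRingHom R π)).det =
      ((leftRegularMatrix H R t' g).map (mapDomainRingHom R π)).det := by
  classical
  have : Finite (G ⧸ H) := .of_equiv ι (leftTransversalEquiv H ht)
  have := H.finiteIndex_of_finite_quotient
  let := Fintype.ofFinite (G ⧸ H)
  rw [det_map_leftRegularMatrix H π ht, det_map_leftRegularMatrix H π ht']

end Subgroup

theorem right_determinant_eq_left_determinant_general
    {R : Type*} [CommRing R] {G : Type*} [Group G] (H : Subgroup G)
    {A : Type*} [CommGroup A] (π : H →* A)
    (m : ℕ) (t u : Fin m → G)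
    (ht : ∀ g : G, ∃! i : Fin m, (t i)⁻¹ * g ∈ H)
    (hu : ∀ g : G, ∃! i : Fin m, g * (u i)⁻¹ ∈ H)
    (g : G)
    (L Rm : Matrix (Fin m) (Fin m) (MonoidAlgebra R H))
    (hL : ∀ j : Fin m, MonoidAlgebra.of R G g * MonoidAlgebra.of R G (t j) =
      ∑ i : Fin m, MonoidAlgebra.of R G (t i) *
        MonoidAlgebra.mapDomainRingHom R H.subtype (L i j))
    (hR : ∀ i : Fin m, MonoidAlgebra.of R G (u i) * MonoidAlgebra.of R G g =
      ∑ j : Fin m, MonoidAlgebra.mapDomainRingHom R H.subtype (Rm i j) *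
        MonoidAlgebra.of R G (u j)) :
    (Rm.map (MonoidAlgebra.mapDomainRingHom R π)).det =
      (L.map (MonoidAlgebra.mapDomainRingHom R π)).det := by
  rw [H.eq_leftRegularMatrix_inv_of_mul_eq_sum hu g Rm hR,
    H.eq_leftRegularMatrix_of_mul_eq_sum ht g L hL]
  exact H.det_map_leftRegularMatrix_eq π (H.existsUnique_inv_inv_mul_mem hu) ht g

/-- For every group element `g`, the noncommutative
determinant computed from any right regular representation agrees with the one
computed from any left regular representation:
`det(ψ(R_U(g))) = det(ψ(L_T(g)))` in `R(H/K)`.  The abelian quotient `H/K` is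
encoded as a commutative group `A` with a surjective homomorphism `π : H →* A`
with kernel `K`, and `ψ` applies `π` entrywise. -/
theorem right_determinant_eq_left_determinant
    {R : Type*} [CommRing R] {G : Type*} [Group G] (H : Subgroup G)
    (K : Subgroup H) [K.Normal]
    {A : Type*} [CommGroup A] (π : H →* A)
    (hπ : Function.Surjective π) (hker : π.ker = K)
    (m : ℕ) (t u : Fin m → G)
    (ht : ∀ g : G, ∃! i : Fin m, (t i)⁻¹ * g ∈ H)
    (hu : ∀ g : G, ∃! i : Fin m, g * (u i)⁻¹ ∈ H)
    (g : G)
    (L Rm : Matrix (Fin m) (Fin m) (MonoidAlgebra R H))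
    (hL : ∀ j : Fin m, MonoidAlgebra.of R G g * MonoidAlgebra.of R G (t j) =
      ∑ i : Fin m, MonoidAlgebra.of R G (t i) *
        MonoidAlgebra.mapDomainRingHom R H.subtype (L i j))
    (hR : ∀ i : Fin m, MonoidAlgebra.of R G (u i) * MonoidAlgebra.of R G g =
      ∑ j : Fin m, MonoidAlgebra.mapDomainRingHom R H.subtype (Rm i j) *
        MonoidAlgebra.of R G (u j)) :
    (Rm.map (MonoidAlgebra.mapDomainRingHom R π)).det =
      (L.map (MonoidAlgebra.mapDomainRingHom R π)).det :=
  right_determinant_eq_left_determinant_general H π m t u ht hu g L Rm hL hR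
end

section
/- Let R = ℂ, let D₃ = ⟨a, b | a³ = b² = e, ab = ba⁻¹⟩ be the dihedral group of order 6, let G = (ℤ/2ℤ) × D₃, let H = {0̄} × D₃ ≅ D₃, and let K be the commutator subgroup of H. Then the element α = (0̄, e) + (0̄, a) + (0̄, a²) of the group algebra ℂG is not invertible in ℂG, but the noncommutative determinant Det(α) = det(ψ(L_T(α))) = 9·K (nine times the identity coset, as an element of ℂ(H/K)) is invertible in ℂ(H/K). In particular, invertibility of α in RG is not equivalent to invertibility of Det(α) in R(H/K). -/
/-!
The element `α` is the image of the sum `β = 1 + a + a²` of the rotations of `D₃`. That sum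
absorbs the rotation `a`, so `α (1 - a) = 0` and `α` is a zero divisor. It is also central,
so `α tⱼ = tⱼ β` for every coset representative; since `ℂG` is free over `ℂH` on any left
transversal, `L_T(α)` is the scalar matrix `β · 1`. In a dihedral group of odd order every
rotation is a commutator, hence `β` maps to `3` in `ℂ(H/K)` and `Det(α) = 3² = 9`.
-/

noncomputable section

/-- `G = (ℤ/2ℤ) × D₃`, with `ℤ/2ℤ` written multiplicatively and
`D₃` the dihedral group of order 6 (`a = DihedralGroup.r 1`, `b = DihedralGroup.sr 0`). -/
abbrev ExampleG : Type := Multiplicative (ZMod 2) × DihedralGroup 3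

/-- `H = {0̄} × D₃`, the subgroup of `G` of index 2 isomorphic to `D₃`. -/
def ExampleH : Subgroup ExampleG :=
  (⊥ : Subgroup (Multiplicative (ZMod 2))).prod (⊤ : Subgroup (DihedralGroup 3))

/-- `α = (0̄, e) + (0̄, a) + (0̄, a²) ∈ ℂG`. -/
def exampleα : MonoidAlgebra ℂ ExampleG :=
  MonoidAlgebra.of ℂ ExampleG (1, (1 : DihedralGroup 3)) +
    MonoidAlgebra.of ℂ ExampleG (1, DihedralGroup.r 1) +
    MonoidAlgebra.of ℂ ExampleG (1, DihedralGroup.r 2)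

open MonoidAlgebra
open scoped commutatorElement

namespace DihedralGroup

section Commutator

variable {n : ℕ}

theorem r_two_mul_eq_commutatorElement (i : ZMod n) : r (2 * i) = ⁅r i, sr 0⁆ := by
  simp only [commutatorElement_def, r_mul_sr, sr_mul_r, inv_r, inv_sr, sr_mul_sr]
  congr 1
  ring

theorem map_r_eq_one_of_odd {A : Type*} [CommGroup A] (hn : Odd n) (f : DihedralGroup n →* A)
    (i : ZMod n) : f (r i) = 1 := by
  obtain ⟨m, rfl⟩ := hn
  have hi : i = 2 * ((m + 1) * i) := by
    have hn : ((2 * m + 1 : ℕ) : ZMod (2 * m + 1)) = 0 := ZMod.natCast_self _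
    push_cast at hn
    linear_combination (-i) * hn
  rw [hi, r_two_mul_eq_commutatorElement, map_commutatorElement,
    commutatorElement_eq_one_iff_mul_comm]
  exact mul_comm _ _

end Commutator

section RotationSum

variable (k : Type*) [Semiring k] (n : ℕ) [NeZero n]

def rotationSum : MonoidAlgebra k (DihedralGroup n) :=
  ∑ i : ZMod n, of k _ (r i)

theorem rotationSum_mul_of_r (j : ZMod n) : rotationSum k n * of k _ (r j) = rotationSum k n := by
  simp only [rotationSum, Finset.sum_mul, ← map_mul, r_mul_r]
  exact Fintype.sum_equiv (Equiv.addRight j) _ _ fun _ => rfl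

theorem commute_of_rotationSum (g : DihedralGroup n) : Commute (of k _ g) (rotationSum k n) := by
  simp only [Commute, SemiconjBy, rotationSum, Finset.mul_sum, Finset.sum_mul, ← map_mul]
  cases g with
  | r j => simp only [r_mul_r, add_comm]
  | sr j =>
    refine Fintype.sum_equiv (Equiv.neg _) _ _ fun i => ?_
    rw [sr_mul_r, Equiv.neg_apply, r_mul_sr, sub_neg_eq_add]

theorem mapDomainRingHom_rotationSum {M : Type*} [Monoid M] (f : DihedralGroup n →* M)
    (hf : ∀ i, f (r i) = 1) : mapDomainRingHom k f (rotationSum k n) = n := by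
  simp [rotationSum, hf, natCast_def]

end RotationSum

end DihedralGroup

namespace MonoidAlgebra

theorem not_isUnit_of_mul_of_eq_self {k G : Type*} [Semiring k] [Nontrivial k] [Monoid G]
    {x : MonoidAlgebra k G} {g : G} (hg : g ≠ 1) (hx : x * of k G g = x) : ¬IsUnit x :=
  fun hu => hg <| of_injective <| by rw [map_one]; exact hu.mul_left_cancel (by rw [hx, mul_one])

theorem commute_of_mapDomainRingHom_inr {k A N : Type*} [Semiring k] [Monoid A] [Monoid N]
    {x : MonoidAlgebra k N} (hx : ∀ n, Commute (of k N n) x) (g : A × N) :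
    Commute (of k (A × N) g) (mapDomainRingHom k (MonoidHom.inr A N) x) := by
  rw [← Prod.fst_mul_snd g, map_mul]
  have hinl (y : MonoidAlgebra k N) :
      Commute (of k (A × N) (g.1, 1)) (mapDomainRingHom k (MonoidHom.inr A N) y) := by
    induction y using MonoidAlgebra.induction_linear with
    | zero => simp
    | add y z hy hz => simpa only [map_add] using hy.add_right hz
    | single n r =>
      simpa using single_commute_single (MonoidHom.commute_inl_inr g.1 n) (Commute.one_left r)
  exact (hinl x).mul_left (by simpa using (hx g.2).map (mapDomainRingHom k (MonoidHom.inr A N)))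

section Subgroup

variable {k G : Type*} [Group G] {H : Subgroup G}

theorem coeff_of_mul_mapDomain_subtype_mul [Semiring k] (g : G) (x : MonoidAlgebra k H) (h : H) :
    (of k G g * mapDomainRingHom k H.subtype x).coeff (g * h) = x.coeff h := by
  rw [of_apply, coeff_single_mul_apply, one_mul, inv_mul_cancel_left, mapDomainRingHom_apply,
    coeff_mapDomain]
  exact Finsupp.mapDomain_apply Subtype.val_injective x.coeff h

theorem coeff_of_mul_mapDomain_subtype_of_notMem [Semiring k] {g g' : G} (hg : g⁻¹ * g' ∉ H)
    (x : MonoidAlgebra k H) : (of k G g * mapDomainRingHom k H.subtype x).coeff g' = 0 := by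
  rw [of_apply, coeff_single_mul_apply, one_mul, mapDomainRingHom_apply, coeff_mapDomain]
  exact Finsupp.mapDomain_of_notMem_range _ _ (by simpa using hg)

theorem eq_zero_of_sum_of_mul_mapDomain_subtype_eq_zero [Semiring k] {ι : Type*} [Fintype ι]
    {t : ι → G} (ht : ∀ g, ∃! i, (t i)⁻¹ * g ∈ H) {x : ι → MonoidAlgebra k H}
    (hx : ∑ i, of k G (t i) * mapDomainRingHom k H.subtype (x i) = 0) (i : ι) : x i = 0 := by
  ext h
  have hcoeff := congr(($hx).coeff (t i * h))
  have hother : ∀ j, j ≠ i → (t j)⁻¹ * (t i * h) ∉ H := fun j hji hj =>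
    hji ((ht _).unique hj (by simp))
  rwa [coeff_sum, Finset.sum_apply', Finset.sum_eq_single i
    (fun j _ hji => coeff_of_mul_mapDomain_subtype_of_notMem (hother j hji) _) (by simp),
    coeff_of_mul_mapDomain_subtype_mul] at hcoeff

theorem matrix_eq_diagonal_of_commute [Ring k] {ι : Type*} [Fintype ι] [DecidableEq ι]
    {t : ι → G} (ht : ∀ g, ∃! i, (t i)⁻¹ * g ∈ H) {β : MonoidAlgebra k H}
    (hβ : ∀ i, Commute (mapDomainRingHom k H.subtype β) (of k G (t i)))
    {L : Matrix ι ι (MonoidAlgebra k H)}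
    (hL : ∀ j, mapDomainRingHom k H.subtype β * of k G (t j) =
      ∑ i, of k G (t i) * mapDomainRingHom k H.subtype (L i j)) :
    L = Matrix.diagonal fun _ => β := by
  ext i j : 1
  rw [← sub_eq_zero]
  refine eq_zero_of_sum_of_mul_mapDomain_subtype_eq_zero ht
    (x := fun i => L i j - Matrix.diagonal (fun _ => β) i j) ?_ i
  simp only [map_sub, mul_sub, Finset.sum_sub_distrib, ← hL]
  simp only [Matrix.diagonal_apply, apply_ite, map_zero, mul_zero, Finset.sum_ite_eq',
    Finset.mem_univ, if_true, (hβ j).eq, sub_self]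

end Subgroup

end MonoidAlgebra

def dihedralToExampleH : DihedralGroup 3 →* ExampleH :=
  (MonoidHom.inr _ _).codRestrict ExampleH fun d =>
    Subgroup.mem_prod.mpr ⟨Subgroup.one_mem _, Subgroup.mem_top d⟩

def exampleβ : MonoidAlgebra ℂ ExampleH :=
  mapDomainRingHom ℂ dihedralToExampleH (DihedralGroup.rotationSum ℂ 3)

theorem exampleα_eq_mapDomainRingHom_rotationSum :
    exampleα = mapDomainRingHom ℂ (MonoidHom.inr _ _) (DihedralGroup.rotationSum ℂ 3) := by
  rw [DihedralGroup.rotationSum, map_sum,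
    show (Finset.univ : Finset (ZMod 3)) = {0, 1, 2} from rfl, Finset.sum_insert (by decide),
    Finset.sum_pair (by decide)]
  simp only [mapDomainRingHom_apply, of_apply, mapDomain_single, MonoidHom.inr_apply,
    exampleα, DihedralGroup.one_def, add_assoc]

theorem not_isUnit_exampleα : ¬IsUnit exampleα := by
  refine not_isUnit_of_mul_of_eq_self (g := (1, DihedralGroup.r 1)) (by decide) ?_
  have hr : of ℂ ExampleG (1, DihedralGroup.r 1) =
      mapDomainRingHom ℂ (MonoidHom.inr _ _) (of ℂ _ (DihedralGroup.r 1)) := by simp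
  rw [exampleα_eq_mapDomainRingHom_rotationSum, hr, ← map_mul,
    DihedralGroup.rotationSum_mul_of_r]

theorem mapDomainRingHom_subtype_exampleβ :
    mapDomainRingHom ℂ ExampleH.subtype exampleβ = exampleα := by
  rw [exampleβ, exampleα_eq_mapDomainRingHom_rotationSum, ← RingHom.comp_apply,
    ← mapDomainRingHom_comp]
  rfl

theorem commute_exampleα (g : ExampleG) : Commute exampleα (of ℂ ExampleG g) := by
  rw [exampleα_eq_mapDomainRingHom_rotationSum]
  exact (commute_of_mapDomainRingHom_inr (DihedralGroup.commute_of_rotationSum ℂ 3) g).symm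

theorem mapDomainRingHom_abelianization_exampleβ :
    mapDomainRingHom ℂ Abelianization.of exampleβ = 3 := by
  rw [exampleβ, ← RingHom.comp_apply, ← mapDomainRingHom_comp,
    DihedralGroup.mapDomainRingHom_rotationSum _ _ _
      (DihedralGroup.map_r_eq_one_of_odd (by decide) _)]
  norm_cast

/-- With `K = [H, H]` the commutator subgroup of `H` (so that
`H/K = Abelianization H`), the element `α = (0̄,e) + (0̄,a) + (0̄,a²)` of `ℂG` is
not invertible, but for any complete set `{t₁, t₂}` of left coset
representatives of `H` in `G` and the corresponding left regular
representation matrix `L = L_T(α)`, the noncommutative determinant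
`Det(α) = det(ψ(L)) = 9·K` (nine times the identity coset) is invertible in
`ℂ(H/K)`.  In particular invertibility of `α` in `ℂG` is not equivalent to
invertibility of `Det(α)` in `ℂ(H/K)`. -/
theorem det_invertible_but_element_not_invertible
    (t : Fin 2 → ExampleG)
    (ht : ∀ g : ExampleG, ∃! i : Fin 2, (t i)⁻¹ * g ∈ ExampleH)
    (L : Matrix (Fin 2) (Fin 2) (MonoidAlgebra ℂ ExampleH))
    (hL : ∀ j : Fin 2, exampleα * MonoidAlgebra.of ℂ ExampleG (t j) =
      ∑ i : Fin 2, MonoidAlgebra.of ℂ ExampleG (t i) *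
        MonoidAlgebra.mapDomainRingHom ℂ ExampleH.subtype (L i j)) :
    ¬ IsUnit exampleα ∧
    (L.map (MonoidAlgebra.mapDomainRingHom ℂ
        (Abelianization.of : ExampleH →* Abelianization ExampleH))).det =
      (9 : MonoidAlgebra ℂ (Abelianization ExampleH)) ∧
    IsUnit ((L.map (MonoidAlgebra.mapDomainRingHom ℂ
        (Abelianization.of : ExampleH →* Abelianization ExampleH))).det) := by
  have hLβ : L = Matrix.diagonal fun _ => exampleβ :=
    matrix_eq_diagonal_of_commute ht
      (fun i => mapDomainRingHom_subtype_exampleβ ▸ commute_exampleα (t i))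
      (mapDomainRingHom_subtype_exampleβ ▸ hL)
  have hdet : (L.map (mapDomainRingHom ℂ Abelianization.of)).det = 9 := by
    rw [hLβ, Matrix.diagonal_map (map_zero _), Matrix.det_diagonal,
      mapDomainRingHom_abelianization_exampleβ]
    norm_num
  refine ⟨not_isUnit_exampleα, hdet, ?_⟩
  rw [hdet, ← map_ofNat (algebraMap ℂ _) 9]
  exact (IsUnit.mk0 (9 : ℂ) (by norm_num)).map _

end
end
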